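/- Suppose F : ℝ^p → ℝ is differentiable and satisfies, for some symmetric positive definite P, ε > 0, ζ ∈ (0,1): F(y) ≤ F(x) + ⟨∇F(x), y−x⟩ + ((1+ζ)(1+ε)/2)‖y−x‖_P² and F(y) ≥ F(x) + ⟨∇F(x), y−x⟩ + ((1−ζ)/(2(1+ε)))‖y−x‖_P² for all x, y in a set containing w', w'' := w' − (1/((1+ζ)(1+ε)))P⁻¹∇F(w'), and the minimizer w⋆. Then F(w'') − F(w⋆) ≤ (1 − ((1−ζ)/(1+ζ))·(1/(1+ε)²))(F(w') − F(w⋆)). -/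

import Mathlib

/-!
Write `L = (1+ζ)(1+ε)`, `μ = (1−ζ)/(1+ε)` and `G = ‖∇F(w')‖²_{P⁻¹} = quadForm P⁻¹ (g w')`.
The step `w'' − w' = −L⁻¹P⁻¹∇F(w')` minimises the quadratic upper model, whose minimum value gives
`F(w'') ≤ F(w') − G/(2L)`. Minimising the quadratic lower model over `y` by completing the square
in the `P`-norm gives `F(w⋆) ≥ F(w') − G/(2μ)`. Eliminating `G` yields the factor `1 − μ/L`.
-/

open Matrix

noncomputable section

/-- The `A`-weighted quadratic form `‖v‖_A² = vᵀ A v`. -/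
def quadForm {p : ℕ} (A : Matrix (Fin p) (Fin p) ℝ) (v : Fin p → ℝ) : ℝ :=
  v ⬝ᵥ A.mulVec v

section QuadForm

variable {p : ℕ}

lemma quadForm_nonneg {A : Matrix (Fin p) (Fin p) ℝ} (hA : A.PosSemidef) (v : Fin p → ℝ) :
    0 ≤ quadForm A v := by
  simpa [quadForm] using hA.dotProduct_mulVec_nonneg v

lemma quadForm_smul (A : Matrix (Fin p) (Fin p) ℝ) (t : ℝ) (v : Fin p → ℝ) :
    quadForm A (t • v) = t ^ 2 * quadForm A v := by
  simp only [quadForm, mulVec_smul, dotProduct_smul, smul_dotProduct, smul_eq_mul]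
  ring

lemma quadForm_add {A : Matrix (Fin p) (Fin p) ℝ} (hA : A.IsSymm) (u v : Fin p → ℝ) :
    quadForm A (u + v) = quadForm A u + 2 * (u ⬝ᵥ A *ᵥ v) + quadForm A v := by
  have hvu : v ⬝ᵥ A *ᵥ u = u ⬝ᵥ A *ᵥ v := by
    rw [dotProduct_mulVec, ← mulVec_transpose, hA.eq, dotProduct_comm]
  simp only [quadForm, mulVec_add, dotProduct_add, add_dotProduct, hvu]
  ring

lemma quadForm_inv_mulVec {A : Matrix (Fin p) (Fin p) ℝ} (hA : IsUnit A.det) (g : Fin p → ℝ) :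
    quadForm A (A⁻¹ *ᵥ g) = quadForm A⁻¹ g := by
  rw [quadForm, quadForm, mulVec_mulVec, mul_nonsing_inv _ hA, one_mulVec, dotProduct_comm]

lemma dotProduct_add_half_quadForm_newton_step {A : Matrix (Fin p) (Fin p) ℝ}
    (hA : IsUnit A.det) {L : ℝ} (hL : L ≠ 0) (g : Fin p → ℝ) :
    g ⬝ᵥ (-(1 / L) • A⁻¹ *ᵥ g) + L / 2 * quadForm A (-(1 / L) • A⁻¹ *ᵥ g)
      = -(quadForm A⁻¹ g / (2 * L)) := by
  rw [quadForm_smul, quadForm_inv_mulVec hA, dotProduct_smul, smul_eq_mul, quadForm]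
  field_simp
  ring

lemma neg_quadForm_inv_div_le_dotProduct_add_half_quadForm {A : Matrix (Fin p) (Fin p) ℝ}
    (hA : A.PosDef) {μ : ℝ} (hμ : 0 < μ) (g u : Fin p → ℝ) :
    -(quadForm A⁻¹ g / (2 * μ)) ≤ g ⬝ᵥ u + μ / 2 * quadForm A u := by
  have hdet : IsUnit A.det := (isUnit_iff_isUnit_det A).mp hA.isUnit
  have hsq := quadForm_nonneg hA.posSemidef (u + (1 / μ) • A⁻¹ *ᵥ g)
  rw [quadForm_add (isHermitian_iff_isSymm.mp hA.isHermitian), quadForm_smul,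
    quadForm_inv_mulVec hdet, mulVec_smul, mulVec_mulVec, mul_nonsing_inv _ hdet, one_mulVec,
    dotProduct_smul, smul_eq_mul, dotProduct_comm u] at hsq
  have key : 0 ≤ μ / 2 * (quadForm A u + 2 * (1 / μ * (g ⬝ᵥ u)) + (1 / μ) ^ 2 * quadForm A⁻¹ g) :=
    mul_nonneg (by positivity) hsq
  have expand : μ / 2 * (quadForm A u + 2 * (1 / μ * (g ⬝ᵥ u)) + (1 / μ) ^ 2 * quadForm A⁻¹ g)
      = g ⬝ᵥ u + μ / 2 * quadForm A u + quadForm A⁻¹ g / (2 * μ) := by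
    field_simp
    ring
  linarith

end QuadForm

theorem approx_lazy_newton_one_step_general {p : ℕ}
    (P : Matrix (Fin p) (Fin p) ℝ) (hP : P.PosDef)
    (ε ζ : ℝ) (hε : 0 < ε) (hζ0 : 0 < ζ) (hζ1 : ζ < 1)
    (S : Set (Fin p → ℝ))
    (F : (Fin p → ℝ) → ℝ) (g : (Fin p → ℝ) → Fin p → ℝ)
    (hupper : ∀ x ∈ S, ∀ y ∈ S,
      F y ≤ F x + g x ⬝ᵥ (y - x) + (1 + ζ) * (1 + ε) / 2 * quadForm P (y - x))
    (hlower : ∀ x ∈ S, ∀ y ∈ S,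
      F y ≥ F x + g x ⬝ᵥ (y - x) + (1 - ζ) / (2 * (1 + ε)) * quadForm P (y - x))
    (w' w'' wstar : Fin p → ℝ) (hw' : w' ∈ S) (hw'' : w'' ∈ S) (hwstar : wstar ∈ S)
    (hstep : w'' = w' - (1 / ((1 + ζ) * (1 + ε))) • P⁻¹.mulVec (g w')) :
    F w'' - F wstar ≤ (1 - (1 - ζ) / (1 + ζ) * (1 / (1 + ε) ^ 2)) * (F w' - F wstar) := by
  set L := (1 + ζ) * (1 + ε) with hL_def
  set μ := (1 - ζ) / (1 + ε) with hμ_def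
  have hL : 0 < L := by positivity
  have hμ : 0 < μ := div_pos (by linarith) (by linarith)
  set G := quadForm P⁻¹ (g w')
  have hdescent : F w'' ≤ F w' - G / (2 * L) := by
    have h := hupper w' hw' w'' hw''
    rw [show w'' - w' = -(1 / L) • P⁻¹ *ᵥ g w' by rw [hstep, neg_smul]; abel] at h
    linarith [dotProduct_add_half_quadForm_newton_step
      ((isUnit_iff_isUnit_det P).mp hP.isUnit) hL.ne' (g w')]
  have hgap : F w' - G / (2 * μ) ≤ F wstar := by
    have h := hlower w' hw' wstar hwstar
    rw [show (1 - ζ) / (2 * (1 + ε)) = μ / 2 by rw [hμ_def, div_div, mul_comm]] at h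
    linarith [neg_quadForm_inv_div_le_dotProduct_add_half_quadForm hP hμ (g w') (wstar - w')]
  have hrate : (1 - ζ) / (1 + ζ) * (1 / (1 + ε) ^ 2) = μ / L := by
    rw [hμ_def, hL_def]
    field_simp
  have hG : μ / L * (F w' - F wstar) ≤ G / (2 * L) := by
    calc μ / L * (F w' - F wstar) ≤ μ / L * (G / (2 * μ)) := by gcongr; linarith
      _ = G / (2 * L) := by field_simp
  rw [hrate]
  linarith

/-- One-step improvement for approximate, lazy Newton's method: if on a set `S` containing
`w'`, `w'' = w' − (1/((1+ζ)(1+ε)))P⁻¹∇F(w')` and the minimizer `w⋆`, `F` satisfies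
`F(y) ≤ F(x) + ⟨∇F(x), y−x⟩ + ((1+ζ)(1+ε)/2)‖y−x‖_P²` and
`F(y) ≥ F(x) + ⟨∇F(x), y−x⟩ + ((1−ζ)/(2(1+ε)))‖y−x‖_P²`, then
`F(w'') − F(w⋆) ≤ (1 − ((1−ζ)/(1+ζ))·(1/(1+ε)²))(F(w') − F(w⋆))`. -/
theorem approx_lazy_newton_one_step {p : ℕ}
    (P : Matrix (Fin p) (Fin p) ℝ) (hP : P.PosDef)
    (ε ζ : ℝ) (hε : 0 < ε) (hζ0 : 0 < ζ) (hζ1 : ζ < 1)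
    (S : Set (Fin p → ℝ))
    (F : (Fin p → ℝ) → ℝ) (g : (Fin p → ℝ) → Fin p → ℝ)
    (hgrad : ∀ x, ∃ f' : (Fin p → ℝ) →L[ℝ] ℝ, HasFDerivAt F f' x ∧ ∀ v, f' v = g x ⬝ᵥ v)
    (hupper : ∀ x ∈ S, ∀ y ∈ S,
      F y ≤ F x + g x ⬝ᵥ (y - x) + (1 + ζ) * (1 + ε) / 2 * quadForm P (y - x))
    (hlower : ∀ x ∈ S, ∀ y ∈ S,
      F y ≥ F x + g x ⬝ᵥ (y - x) + (1 - ζ) / (2 * (1 + ε)) * quadForm P (y - x))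
    (w' w'' wstar : Fin p → ℝ) (hw' : w' ∈ S) (hw'' : w'' ∈ S) (hwstar : wstar ∈ S)
    (hmin : ∀ y, F wstar ≤ F y)
    (hstep : w'' = w' - (1 / ((1 + ζ) * (1 + ε))) • P⁻¹.mulVec (g w')) :
    F w'' - F wstar ≤ (1 - (1 - ζ) / (1 + ζ) * (1 / (1 + ε) ^ 2)) * (F w' - F wstar) :=
  approx_lazy_newton_one_step_general P hP ε ζ hε hζ0 hζ1 S F g hupper hlower w' w'' wstar hw' hw''
    hwstar hstep
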